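/- Let Γ be the tile graph of a sequence of covers {Xⁿ} of a set S, with Gromov product (X·Y) := ½(|X| + |Y| − |X−Y|) with respect to the base tile S. Suppose there are constants C₁ ≥ 0 and C_cv ≥ 0 such that |m(X,Y) − (X·Y)| ≤ C₁ for all tiles X,Y (where m is the tile-extended proximity function) and m(X,Y) ≥ min{m(X,Z), m(Z,Y)} − C_cv for all tiles X,Y,Z. Then Γ is Gromov hyperbolic: (X·Y) ≥ min{(X·Z), (Z·Y)} − (2C₁ + C_cv) for all tiles X,Y,Z. -/

import Mathlib

open Set

variable {S : Type*}

/-- A chain of tiles in a cover `T`: consecutive tiles intersect. -/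
def TileChain (T : Set (Set S)) (A B : Set S) (k : ℕ) : Prop :=
  ∃ c : ℕ → Set S, c 0 = A ∧ c k = B ∧ (∀ i, i ≤ k → c i ∈ T) ∧
    ∀ i, i < k → (c i ∩ c (i + 1)).Nonempty

/-- The width-`w` neighborhood `U_w(A)` of a tile `A` in a cover `T`. -/
def Uw (T : Set (Set S)) (w : ℕ) (A : Set S) : Set S :=
  ⋃₀ {B | B ∈ T ∧ ∃ k, k ≤ w ∧ TileChain T A B k}

/-- The `U_w`-proximity function associated with a sequence of covers. -/
noncomputable def prox (X : ℕ → Set (Set S)) (w : ℕ) (x y : S) : ℕ∞ :=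
  ⨆ n ∈ {n : ℕ | ∃ A ∈ X n, ∃ B ∈ X n, x ∈ A ∧ y ∈ B ∧
    (Uw (X n) w A ∩ Uw (X n) w B).Nonempty}, (n : ℕ∞)

/-- The proximity function extended to tiles: `m(X,Y) = min{m(x,y) : x ∈ X, y ∈ Y}`. -/
noncomputable def proxSet (X : ℕ → Set (Set S)) (w : ℕ) (A B : Set S) : ℕ∞ :=
  ⨅ x ∈ A, ⨅ y ∈ B, prox X w x y

/-- The vertex set of the tile graph: tiles with their levels. -/
abbrev Tile (X : ℕ → Set (Set S)) : Type _ := {p : ℕ × Set S // p.2 ∈ X p.1}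

/-- The tile graph of a sequence of covers: two distinct tiles are adjacent iff they
intersect and their levels differ by at most `1`. -/
def tileGraph (X : ℕ → Set (Set S)) : SimpleGraph (Tile X) where
  Adj p q := p ≠ q ∧ (p.1.2 ∩ q.1.2).Nonempty ∧ p.1.1 ≤ q.1.1 + 1 ∧ q.1.1 ≤ p.1.1 + 1
  symm := by
    constructor
    rintro p q ⟨h1, h2, h3, h4⟩
    refine ⟨h1.symm, ?_, h4, h3⟩
    rwa [Set.inter_comm]
  loopless := by
    constructor
    rintro p ⟨h1, -⟩
    exact h1 rfl

/-- The Gromov product `(X·Y) = ½(|X| + |Y| − |X−Y|)` on the tile graph, with respect to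
the base point of level `0`. -/
noncomputable def gromovProd (X : ℕ → Set (Set S)) (p q : Tile X) : ℝ :=
  ((p.1.1 : ℝ) + (q.1.1 : ℝ) - ((tileGraph X).dist p q : ℝ)) / 2

/-! The Gromov product stays within `C₁` of the integer-valued proximity `m`, which satisfies
the hyperbolicity inequality with constant `C_cv`; transporting that inequality to the Gromov
product costs `C₁` on the side of `(X·Y)` and `C₁` on the side of the minimum. -/

theorem ENat.min_toNat_le_of_min_le {a b c : ℕ∞} {k : ℕ} (hc : c ≠ ⊤)
    (h : min a b ≤ c + k) : min a.toNat b.toNat ≤ c.toNat + k := by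
  lift c to ℕ using hc
  induction a using ENat.recTopCoe <;> induction b using ENat.recTopCoe <;> simp_all
  exact_mod_cast h

theorem min_sub_le_of_abs_sub_le {a b c a' b' c' ε δ : ℝ} (ha : |a - a'| ≤ ε)
    (hb : |b - b'| ≤ ε) (hc : |c - c'| ≤ ε) (h : min a b ≤ c + δ) :
    min a' b' - (2 * ε + δ) ≤ c' := by
  have hmin : min a' b' ≤ min a b + ε := by
    rw [← min_add_add_right]
    exact min_le_min (by linarith [abs_le.mp ha]) (by linarith [abs_le.mp hb])
  linarith [abs_le.mp hc]

theorem stmt14_general (S : Type*) (X : ℕ → Set (Set S)) (w : ℕ)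
    (C₁ : ℝ) (Ccv : ℕ)
    (hcomp : ∀ p q : Tile X, proxSet X w p.1.2 q.1.2 ≠ ⊤ ∧
      |((proxSet X w p.1.2 q.1.2).toNat : ℝ) - gromovProd X p q| ≤ C₁)
    (hhyp : ∀ p q r : Tile X,
      min (proxSet X w p.1.2 r.1.2) (proxSet X w r.1.2 q.1.2) ≤
        proxSet X w p.1.2 q.1.2 + (Ccv : ℕ∞)) :
    ∀ p q r : Tile X,
      min (gromovProd X p r) (gromovProd X r q) - (2 * C₁ + (Ccv : ℝ)) ≤
        gromovProd X p q := by
  intro p q r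
  obtain ⟨hpq_fin, hpq⟩ := hcomp p q
  refine min_sub_le_of_abs_sub_le (hcomp p r).2 (hcomp r q).2 hpq ?_
  exact_mod_cast ENat.min_toNat_le_of_min_le hpq_fin (hhyp p q r)

/-- If the tile-extended proximity function `m` agrees, up to a bounded error `C₁`, with
the Gromov product on the tile graph, and satisfies the hyperbolicity inequality with
constant `C_cv`, then the tile graph is Gromov hyperbolic:
`(X·Y) ≥ min{(X·Z), (Z·Y)} − (2C₁ + C_cv)`. -/
theorem stmt14 (S : Type*) (X : ℕ → Set (Set S)) (w : ℕ)
    (C₁ : ℝ) (hC₁ : 0 ≤ C₁) (Ccv : ℕ)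
    (hcomp : ∀ p q : Tile X, proxSet X w p.1.2 q.1.2 ≠ ⊤ ∧
      |((proxSet X w p.1.2 q.1.2).toNat : ℝ) - gromovProd X p q| ≤ C₁)
    (hhyp : ∀ p q r : Tile X,
      min (proxSet X w p.1.2 r.1.2) (proxSet X w r.1.2 q.1.2) ≤
        proxSet X w p.1.2 q.1.2 + (Ccv : ℕ∞)) :
    ∀ p q r : Tile X,
      min (gromovProd X p r) (gromovProd X r q) - (2 * C₁ + (Ccv : ℝ)) ≤
        gromovProd X p q :=
  stmt14_general S X w C₁ Ccv hcomp hhyp
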